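/- arXiv:2604.18365 — 3 statements merged into one kernel-verified Lean document; each statement's English description precedes it below -/
import Mathlib

section
/- Let (F, d) be a nonempty compact metric space that is expansively quasi-self-similar: there exist constants λ₀, a₀ > 0 such that for any subset N ⊆ F with diam(N) < λ₀ there exists a map φ: N → F with a₀·d(x,y) ≤ diam(N)·d(φ(x), φ(y)) for all x, y ∈ N. Then the Hausdorff dimension, lower box-counting dimension, and upper box-counting dimension of F all coincide: dim_H F = lower-dim_B F = upper-dim_B F. -/
/-!
In any compact metric space `dimH ≤ lowerBoxDim ≤ upperBoxDim`: a maximal `ε`-packing with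
`n(ε)` centres is a cover by `n(ε)` balls of radius `2ε`, so `μH[d]` is finite as soon as
`n(ε) ≤ ε^(-d)` for arbitrarily small `ε`.

Quasi-self-similarity gives `upperBoxDim ≤ t` for every `t > dimH`. Since `μH[t] = 0`, the space
has a finite open cover by sets `V i` of small diameters `r i` with `∑ r i ^ t` small. The map
attached to `V i` spreads an `ε`-packing inside `V i` into an `ε / c i`-packing, where
`c i = 2 r i / a₀ ≤ 1 / 2`, so `n(ε) ≤ ∑ n(ε / c i)` with `∑ c i ^ t ≤ 1`; iterating this
recursion down the scales gives `n(ε) ≤ K ε^(-t)`.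
-/

open Metric Filter

noncomputable section

/-- `packNum F ε`: the maximal number of pairwise disjoint closed balls of radius `ε`
centered in `F`. -/
def packNum {X : Type*} [MetricSpace X] (F : Set X) (ε : ℝ) : ℕ :=
  sSup {n : ℕ | ∃ s : Finset X, s.card = n ∧ ↑s ⊆ F ∧
    (s : Set X).Pairwise fun x y => Disjoint (closedBall x ε) (closedBall y ε)}

/-- The lower box-counting dimension: `liminf_{ε → 0⁺} (- log n(ε) / log ε)`. -/
def lowerBoxDim {X : Type*} [MetricSpace X] (F : Set X) : ENNReal :=
  Filter.liminf (fun ε : ℝ =>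
    ENNReal.ofReal (-(Real.log (packNum F ε)) / Real.log ε)) (nhdsWithin 0 (Set.Ioi 0))

/-- The upper box-counting dimension: `limsup_{ε → 0⁺} (- log n(ε) / log ε)`. -/
def upperBoxDim {X : Type*} [MetricSpace X] (F : Set X) : ENNReal :=
  Filter.limsup (fun ε : ℝ =>
    ENNReal.ofReal (-(Real.log (packNum F ε)) / Real.log ε)) (nhdsWithin 0 (Set.Ioi 0))


open Set MeasureTheory Topology
open scoped ENNReal NNReal

section Packing

variable {X : Type*} [MetricSpace X]

def IsPacking (ε : ℝ) (s : Finset X) : Prop :=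
  (s : Set X).Pairwise fun x y => Disjoint (closedBall x ε) (closedBall y ε)

lemma IsPacking.lt_dist {ε : ℝ} {s : Finset X} (hs : IsPacking ε s) (hε : 0 ≤ ε) {x y : X}
    (hx : x ∈ s) (hy : y ∈ s) (hxy : x ≠ y) : ε < dist x y := by
  by_contra! hle
  exact Set.disjoint_left.1 (hs hx hy hxy) (mem_closedBall'.2 hle) (mem_closedBall_self hε)

lemma isPacking_of_lt_dist {ε : ℝ} {s : Finset X}
    (h : ∀ x ∈ s, ∀ y ∈ s, x ≠ y → 2 * ε < dist x y) : IsPacking ε s :=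
  fun x hx y hy hxy => closedBall_disjoint_closedBall (by linarith [h x hx y hy hxy])

lemma IsPacking.subset {ε : ℝ} {s t : Finset X} (hs : IsPacking ε s) (hts : t ⊆ s) :
    IsPacking ε t :=
  hs.mono (Finset.coe_subset.2 hts)

lemma IsPacking.anti {ε ε' : ℝ} {s : Finset X} (hs : IsPacking ε s) (hε : ε' ≤ ε) :
    IsPacking ε' s :=
  fun _ hx _ hy hxy =>
    (hs hx hy hxy).mono (closedBall_subset_closedBall hε) (closedBall_subset_closedBall hε)

variable [CompactSpace X]

lemma bddAbove_card_isPacking {ε : ℝ} (hε : 0 < ε) :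
    BddAbove {n : ℕ | ∃ s : Finset X, s.card = n ∧ ↑s ⊆ (univ : Set X) ∧
      IsPacking ε s} := by
  obtain ⟨t, -, ht, hcover⟩ :=
    finite_cover_balls_of_compact (isCompact_univ (X := X)) (half_pos hε)
  choose c hct hc using fun x : X => mem_iUnion₂.1 (hcover (mem_univ x))
  refine ⟨ht.toFinset.card, ?_⟩
  rintro _ ⟨s, rfl, -, hs⟩
  -- two points of a packing cannot share the centre of their `ε / 2`-ball
  refine Finset.card_le_card_of_injOn c (fun x _ => ht.mem_toFinset.2 (hct x))
    fun x hx y hy hxy => by_contra fun hne => ?_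
  have hlt := hs.lt_dist hε.le hx hy hne
  have hx' := mem_ball.1 (hc x)
  have hy' := mem_ball.1 (hc y)
  rw [hxy] at hx'
  linarith [dist_triangle_right x y (c y)]

lemma IsPacking.card_le_packNum {ε : ℝ} (hε : 0 < ε) {s : Finset X} (hs : IsPacking ε s) :
    s.card ≤ packNum (univ : Set X) ε :=
  le_csSup (bddAbove_card_isPacking hε) ⟨s, rfl, subset_univ _, hs⟩

lemma exists_isPacking_card_eq_packNum {ε : ℝ} (hε : 0 < ε) :
    ∃ s : Finset X, IsPacking ε s ∧ s.card = packNum (univ : Set X) ε := by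
  obtain ⟨s, hcard, -, hs⟩ := Nat.sSup_mem
    (by exact ⟨0, ∅, rfl, subset_univ _, by simp [IsPacking]⟩)
    (bddAbove_card_isPacking (X := X) hε)
  exact ⟨s, hs, hcard⟩

lemma packNum_antitoneOn : AntitoneOn (packNum (univ : Set X)) (Ioi 0) := by
  intro ε' hε' ε _ hε
  obtain ⟨s, hs, hcard⟩ := exists_isPacking_card_eq_packNum (X := X) (lt_of_lt_of_le hε' hε)
  exact hcard ▸ (hs.anti hε).card_le_packNum hε'

lemma IsPacking.exists_dist_le_of_card_eq_packNum {ε : ℝ} (hε : 0 < ε) {s : Finset X}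
    (hs : IsPacking ε s) (hcard : s.card = packNum (univ : Set X) ε) (y : X) :
    ∃ x ∈ s, dist y x ≤ 2 * ε := by
  classical
  by_contra! hy
  have hys : y ∉ s := fun h => by linarith [hy y h, dist_self y]
  have hins : IsPacking ε (insert y s) := by
    rw [IsPacking, Finset.coe_insert, Set.pairwise_insert]
    refine ⟨hs, fun x hx _ => ?_⟩
    have h := closedBall_disjoint_closedBall (x := y) (y := x) (δ := ε) (ε := ε)
      (by linarith [hy x hx])
    exact ⟨h, h.symm⟩
  have := hins.card_le_packNum hε
  rw [Finset.card_insert_of_notMem hys, hcard] at this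
  omega

lemma IsPacking.card_le_packNum_of_dist_le_mul {ε c : ℝ} (hε : 0 < ε) (hc : 0 < c)
    {s : Finset X} (hs : IsPacking ε s) {φ : X → X}
    (hφ : ∀ x ∈ s, ∀ y ∈ s, dist x y ≤ c * dist (φ x) (φ y)) :
    s.card ≤ packNum (univ : Set X) (ε / (2 * c)) := by
  classical
  have hsep : ∀ x ∈ s, ∀ y ∈ s, x ≠ y → 2 * (ε / (2 * c)) < dist (φ x) (φ y) := by
    intro x hx y hy hxy
    rw [show 2 * (ε / (2 * c)) = ε / c by field_simp, div_lt_iff₀' hc]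
    exact (hs.lt_dist hε.le hx hy hxy).trans_le (hφ x hx y hy)
  have hinj : Set.InjOn φ s := fun x hx y hy h => by_contra fun hne => by
    have := hsep x hx y hy hne
    rw [h, dist_self] at this
    linarith [show 0 < ε / (2 * c) by positivity]
  rw [← Finset.card_image_of_injOn hinj]
  refine (isPacking_of_lt_dist ?_).card_le_packNum (by positivity)
  simp only [Finset.forall_mem_image]
  exact fun x hx y hy hne => hsep x hx y hy fun h => hne (h ▸ rfl)

lemma packNum_le_sum_packNum {ι : Type*} {I : Finset ι} {V : ι → Set X}
    (hV : ∀ x, ∃ i ∈ I, x ∈ V i) {c : ι → ℝ} (hc : ∀ i ∈ I, 0 < c i)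
    {φ : ι → X → X}
    (hφ : ∀ i ∈ I, ∀ x ∈ V i, ∀ y ∈ V i, dist x y ≤ c i * dist (φ i x) (φ i y))
    {ε : ℝ} (hε : 0 < ε) :
    packNum (univ : Set X) ε ≤ ∑ i ∈ I, packNum (univ : Set X) (ε / (2 * c i)) := by
  classical
  obtain ⟨s, hs, hcard⟩ := exists_isPacking_card_eq_packNum (X := X) hε
  choose g hgI hgV using hV
  rw [← hcard, Finset.card_eq_sum_card_fiberwise (f := g) fun x _ => hgI x]
  refine Finset.sum_le_sum fun i hi => IsPacking.card_le_packNum_of_dist_le_mul hε (hc i hi)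
    (hs.subset (Finset.filter_subset _ _)) fun x hx y hy => hφ i hi x ?_ y ?_
  · exact (Finset.mem_filter.1 hx).2 ▸ hgV x
  · exact (Finset.mem_filter.1 hy).2 ▸ hgV y

end Packing

lemma exists_le_mul_rpow_neg_of_le_sum {ι : Type*} {I : Finset ι} {c : ι → ℝ} {t : ℝ}
    (ht : 0 ≤ t) (hc₀ : ∀ i ∈ I, 0 < c i) (hc : ∀ i ∈ I, c i ≤ 1 / 2)
    (hsum : ∑ i ∈ I, c i ^ t ≤ 1) {N : ℝ → ℝ} (hN₀ : 0 ≤ N)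
    (hN : AntitoneOn N (Ioi 0))
    (hrec : ∀ ε, 0 < ε → N ε ≤ ∑ i ∈ I, N (ε / c i)) :
    ∃ K, ∀ ε, 0 < ε → ε ≤ 1 → N ε ≤ K * ε ^ (-t) := by
  obtain ⟨η, hη, hηc⟩ : ∃ η > 0, ∀ i ∈ I, η ≤ c i := by
    rcases I.eq_empty_or_nonempty with rfl | hI
    · exact ⟨1, one_pos, by simp⟩
    · obtain ⟨j, hj, hjmin⟩ := I.exists_min_image c hI
      exact ⟨c j, hc₀ j hj, hjmin⟩
  have base : ∀ ε, η < ε → ε ≤ 1 → N ε ≤ N η * ε ^ (-t) := fun ε hηε hε1 =>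
    (hN hη (hη.trans hηε) hηε.le).trans <| le_mul_of_one_le_right (hN₀ η)
      (Real.one_le_rpow_of_pos_of_le_one_of_nonpos (hη.trans hηε) hε1 (neg_nonpos.2 ht))
  -- Below `η` every rescaled radius `ε / c i` is at least `2 ε` and still at most `1`.
  have scales :
      ∀ k : ℕ, ∀ ε, η < 2 ^ k * ε → 0 < ε → ε ≤ 1 → N ε ≤ N η * ε ^ (-t) := by
    intro k
    induction k with
    | zero => simpa using fun ε hηε _ => base ε hηε
    | succ k ih =>
      intro ε hk hε hε1
      rcases lt_or_ge η ε with hηε | hεη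
      · exact base ε hηε hε1
      have hterm : ∀ i ∈ I, N (ε / c i) ≤ N η * ε ^ (-t) * c i ^ t := by
        intro i hi
        have hci := hc₀ i hi
        have h2ε : 2 * ε ≤ ε / c i := by
          rw [le_div_iff₀ hci]; nlinarith [hc i hi]
        have hk' : η < 2 ^ k * (ε / c i) := by
          calc η < 2 ^ (k + 1) * ε := hk
            _ = 2 ^ k * (2 * ε) := by ring
            _ ≤ 2 ^ k * (ε / c i) := by gcongr
        have hle1 : ε / c i ≤ 1 := (div_le_one hci).2 (hεη.trans (hηc i hi))
        calc N (ε / c i) ≤ N η * (ε / c i) ^ (-t) := ih _ hk' (by positivity) hle1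
          _ = N η * ε ^ (-t) * c i ^ t := by
            rw [Real.div_rpow hε.le hci.le, Real.rpow_neg hci.le, div_inv_eq_mul, mul_assoc]
      calc N ε ≤ ∑ i ∈ I, N (ε / c i) := hrec ε hε
        _ ≤ ∑ i ∈ I, N η * ε ^ (-t) * c i ^ t := Finset.sum_le_sum hterm
        _ = N η * ε ^ (-t) * ∑ i ∈ I, c i ^ t := by rw [Finset.mul_sum]
        _ ≤ N η * ε ^ (-t) := mul_le_of_le_one_right
          (mul_nonneg (hN₀ η) (by positivity)) hsum
  refine ⟨N η, fun ε hε hε1 => ?_⟩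
  obtain ⟨k, hk⟩ := pow_unbounded_of_one_lt (η / ε) one_lt_two
  exact scales k ε ((div_lt_iff₀ hε).1 hk) hε hε1

section BoxDimension

variable {X : Type*} [MetricSpace X]

lemma upperBoxDim_le_of_packNum_le {F : Set X} {t K : ℝ}
    (h : ∀ ε, 0 < ε → ε ≤ 1 → (packNum F ε : ℝ) ≤ K * ε ^ (-t)) :
    upperBoxDim F ≤ ENNReal.ofReal t := by
  set g : ℝ → ℝ := fun ε => t + Real.log K / -Real.log ε
  have hg : Tendsto g (𝓝[>] 0) (𝓝 t) := by
    simpa [g] using tendsto_const_nhds.add (tendsto_const_nhds.div_atTop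
      (tendsto_neg_atBot_atTop.comp Real.tendsto_log_nhdsGT_zero))
  have hle : ∀ᶠ ε in 𝓝[>] (0 : ℝ),
      ENNReal.ofReal (-Real.log (packNum F ε) / Real.log ε) ≤ ENNReal.ofReal (g ε) := by
    filter_upwards [Ioo_mem_nhdsGT one_pos] with ε ⟨hε, hε1⟩
    have hlog : 0 < -Real.log ε := neg_pos.2 (Real.log_neg hε hε1)
    rcases Nat.eq_zero_or_pos (packNum F ε) with h0 | hpos
    · simp [h0]
    have hn : (0 : ℝ) < packNum F ε := Nat.cast_pos.2 hpos
    have hbound := h ε hε hε1.le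
    have hK : 0 < K := pos_of_mul_pos_left (hn.trans_le hbound) (by positivity)
    have hlogn : Real.log (packNum F ε) ≤ Real.log K + t * -Real.log ε := by
      calc Real.log (packNum F ε) ≤ Real.log (K * ε ^ (-t)) := Real.log_le_log hn hbound
        _ = Real.log K + t * -Real.log ε := by
          rw [Real.log_mul hK.ne' (by positivity), Real.log_rpow hε]; ring
    refine ENNReal.ofReal_le_ofReal ?_
    rw [neg_div, ← div_neg, div_le_iff₀ hlog]
    simp only [g, add_mul, div_mul_cancel₀ _ hlog.ne']
    linarith
  calc upperBoxDim F ≤ limsup (fun ε => ENNReal.ofReal (g ε)) (𝓝[>] 0) :=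
        limsup_le_limsup hle
    _ = ENNReal.ofReal t := ((ENNReal.tendsto_ofReal hg).limsup_eq)

lemma frequently_packNum_lt_rpow_neg {F : Set X} {d : ℝ≥0} (h : lowerBoxDim F < d) :
    ∃ᶠ ε in 𝓝[>] (0 : ℝ), (packNum F ε : ℝ) < ε ^ (-(d : ℝ)) := by
  refine (frequently_lt_of_liminf_lt (by isBoundedDefault) h).mp ?_
  filter_upwards [Ioo_mem_nhdsGT one_pos] with ε ⟨hε, hε1⟩ hlt
  rcases Nat.eq_zero_or_pos (packNum F ε) with h0 | hpos
  · rw [h0, Nat.cast_zero]; positivity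
  have hlog : 0 < -Real.log ε := neg_pos.2 (Real.log_neg hε hε1)
  have hn : (0 : ℝ) < packNum F ε := Nat.cast_pos.2 hpos
  rw [neg_div, ← div_neg, ENNReal.ofReal_lt_coe_iff (div_nonneg (Real.log_nonneg
    (Nat.one_le_cast.2 hpos)) hlog.le), div_lt_iff₀ hlog] at hlt
  rw [Real.lt_rpow_iff_log_lt hn hε]
  linarith

end BoxDimension

section Hausdorff

variable {X : Type*} [MetricSpace X] [CompactSpace X]

lemma hausdorffMeasure_univ_le_of_frequently_packNum_le [MeasurableSpace X] [BorelSpace X]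
    {d : ℝ≥0}
    (h : ∃ᶠ ε in 𝓝[>] (0 : ℝ), (packNum (univ : Set X) ε : ℝ) ≤ ε ^ (-(d : ℝ))) :
    μH[d] (univ : Set X) ≤ ENNReal.ofReal (4 ^ (d : ℝ)) := by
  set l := 𝓝[>] (0 : ℝ) ⊓ 𝓟 {ε | (packNum (univ : Set X) ε : ℝ) ≤ ε ^ (-(d : ℝ))}
  have : l.NeBot := frequently_iff_neBot.1 h
  have hl : ∀ᶠ ε in l, 0 < ε ∧ (packNum (univ : Set X) ε : ℝ) ≤ ε ^ (-(d : ℝ)) :=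
    Eventually.and (mem_inf_of_left self_mem_nhdsWithin) (mem_inf_of_right (mem_principal_self _))
  have hpack : ∀ ε : ℝ, ∃ s : Finset X, 0 < ε →
      s.card = packNum (univ : Set X) ε ∧ ∀ y, ∃ x ∈ s, dist y x ≤ 2 * ε := by
    intro ε
    by_cases hε : 0 < ε
    · obtain ⟨s, hs, hcard⟩ := exists_isPacking_card_eq_packNum (X := X) hε
      exact ⟨s, fun _ => ⟨hcard, hs.exists_dist_le_of_card_eq_packNum hε hcard⟩⟩
    · exact ⟨∅, fun h => absurd h hε⟩
  choose s hs using hpack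
  have hdiam :
      ∀ ε, 0 < ε → ∀ x : X, ediam (closedBall x (2 * ε)) ≤ ENNReal.ofReal (4 * ε) :=
    fun ε hε x => ediam_le_of_forall_dist_le fun y hy z hz => by
      linarith [dist_triangle_right y z x, mem_closedBall.1 hy, mem_closedBall.1 hz]
  have hmeas := Measure.hausdorffMeasure_le_liminf_sum d univ (l := l)
    (fun ε => ENNReal.ofReal (4 * ε))
    (by simpa using (ENNReal.tendsto_ofReal ((continuous_const_mul (4 : ℝ)).tendsto' 0 0
      (mul_zero 4))).mono_left (inf_le_left.trans nhdsWithin_le_nhds))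
    (fun ε (x : s ε) => closedBall (x : X) (2 * ε))
    (hl.mono fun ε hε x => hdiam ε hε.1 x)
    (hl.mono fun ε hε y _ => by
      obtain ⟨x, hx, hxy⟩ := (hs ε hε.1).2 y
      exact mem_iUnion.2 ⟨⟨x, hx⟩, mem_closedBall.2 hxy⟩)
  refine hmeas.trans (liminf_le_of_frequently_le' (hl.mono fun ε ⟨hε, hN⟩ => ?_).frequently)
  calc ∑ x : s ε, ediam (closedBall (x : X) (2 * ε)) ^ (d : ℝ)
      ≤ ∑ _x : s ε, ENNReal.ofReal (4 * ε) ^ (d : ℝ) :=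
        Finset.sum_le_sum fun x _ => ENNReal.rpow_le_rpow (hdiam ε hε x) d.2
    _ = ENNReal.ofReal (packNum (univ : Set X) ε * (4 * ε) ^ (d : ℝ)) := by
        rw [Finset.sum_const, Finset.card_univ, Fintype.card_coe, (hs ε hε).1, nsmul_eq_mul,
          ENNReal.ofReal_mul (Nat.cast_nonneg _), ENNReal.ofReal_natCast,
          ENNReal.ofReal_rpow_of_pos (by positivity)]
    _ ≤ ENNReal.ofReal (ε ^ (-(d : ℝ)) * (4 * ε) ^ (d : ℝ)) :=
        ENNReal.ofReal_le_ofReal (mul_le_mul_of_nonneg_right hN (by positivity))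
    _ = ENNReal.ofReal (4 ^ (d : ℝ)) := by
        rw [Real.mul_rpow (by norm_num) hε.le, Real.rpow_neg hε.le, mul_left_comm,
          inv_mul_cancel₀ (by positivity), mul_one]

theorem dimH_univ_le_lowerBoxDim : dimH (univ : Set X) ≤ lowerBoxDim (univ : Set X) := by
  borelize X
  refine dimH_le fun d hd => le_of_not_gt fun hlt => ?_
  have := hausdorffMeasure_univ_le_of_frequently_packNum_le
    ((frequently_packNum_lt_rpow_neg hlt).mono fun _ h => h.le)
  exact ENNReal.ofReal_ne_top (top_le_iff.1 (hd ▸ this))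

end Hausdorff

lemma eventually_rpow_add_lt {a t η : ℝ} (ht : 0 ≤ t) (hη : 0 < η) :
    ∀ᶠ δ in 𝓝[>] (0 : ℝ), (a + δ) ^ t < a ^ t + η := by
  have hcont : ContinuousAt (fun δ : ℝ => (a + δ) ^ t) 0 :=
    (Real.continuousAt_rpow_const _ t (Or.inr ht)).comp (continuousAt_const.add continuousAt_id)
  exact nhdsWithin_le_nhds (hcont.tendsto.eventually_lt_const (by simpa using hη))

section Cover

variable {X : Type*} [MetricSpace X]

lemma exists_cover_sum_diam_rpow_lt [MeasurableSpace X] [BorelSpace X] {s : Set X} {t : ℝ}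
    (ht : 0 < t) (hs : μH[t] s = 0) {ρ θ : ℝ} (hρ : 0 < ρ) (hθ : 0 < θ) :
    ∃ T : ℕ → Set X, s ⊆ ⋃ n, T n ∧ (∀ n, diam (T n) ≤ ρ) ∧
      ∀ I : Finset ℕ, ∑ n ∈ I, diam (T n) ^ t < θ := by
  have hinf : (⨅ (T : ℕ → Set X) (_ : s ⊆ ⋃ n, T n)
      (_ : ∀ n, ediam (T n) ≤ ENNReal.ofReal ρ), ∑' n, ⨆ _ : (T n).Nonempty, ediam (T n) ^ t) <
      ENNReal.ofReal θ := by
    refine lt_of_le_of_lt ?_ (hs ▸ ENNReal.ofReal_pos.2 hθ)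
    rw [Measure.hausdorffMeasure_apply]
    exact le_iSup₂ (f := fun (r : ℝ≥0∞) (_ : 0 < r) =>
      ⨅ (T : ℕ → Set X) (_ : s ⊆ ⋃ n, T n) (_ : ∀ n, ediam (T n) ≤ r),
        ∑' n, ⨆ _ : (T n).Nonempty, ediam (T n) ^ t) _ (ENNReal.ofReal_pos.2 hρ)
  simp only [iInf_lt_iff] at hinf
  obtain ⟨T, hcov, hdiam, hsum⟩ := hinf
  have hne : ∀ n, ediam (T n) ^ t ≠ ∞ := fun n =>
    ENNReal.rpow_ne_top_of_nonneg ht.le (ne_top_of_le_ne_top ENNReal.ofReal_ne_top (hdiam n))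
  refine ⟨T, hcov, fun n => ENNReal.toReal_le_of_le_ofReal hρ.le (hdiam n), fun I => ?_⟩
  simp_rw [diam, ENNReal.toReal_rpow, ← ENNReal.toReal_sum fun n _ => hne n]
  refine ENNReal.toReal_lt_of_lt_ofReal (lt_of_le_of_lt ((ENNReal.sum_le_tsum I).trans
    (ENNReal.tsum_le_tsum fun n => ?_)) hsum)
  rcases (T n).eq_empty_or_nonempty with hT | hT
  · simp [hT, ht]
  · exact le_iSup_of_le hT le_rfl

variable [CompactSpace X]

lemma exists_finite_cover_sum_rpow_le [MeasurableSpace X] [BorelSpace X] {t : ℝ} (ht : 0 < t)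
    (h0 : μH[t] (univ : Set X) = 0) {ρ θ : ℝ} (hρ : 0 < ρ) (hθ : 0 < θ) :
    ∃ (I : Finset ℕ) (V : ℕ → Set X) (r : ℕ → ℝ), (∀ x, ∃ n ∈ I, x ∈ V n) ∧
      (∀ n, 0 < r n ∧ r n ≤ ρ ∧ diam (V n) ≤ r n) ∧ ∑ n ∈ I, r n ^ t ≤ θ := by
  obtain ⟨T, hcov, hdiam, hsum⟩ :=
    exists_cover_sum_diam_rpow_lt ht h0 (half_pos hρ) (half_pos hθ)
  -- Thicken `T n` to an open set, paying at most `θ / 4 * 2⁻ⁿ` in `diam ^ t`.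
  choose δ hδ using fun n => ((eventually_rpow_add_lt (a := diam (T n)) ht.le
    (by positivity : 0 < θ / 4 * (1 / 2) ^ n)).and (Ioo_mem_nhdsGT (half_pos hρ))).exists
  obtain ⟨I, hI⟩ := isCompact_univ.elim_finite_subcover (fun n => thickening (δ n / 2) (T n))
    (fun n => isOpen_thickening) (hcov.trans (iUnion_mono fun n =>
      self_subset_thickening (half_pos (hδ n).2.1) _))
  refine ⟨I, fun n => thickening (δ n / 2) (T n), fun n => diam (T n) + δ n,
    fun x => by simpa using hI (mem_univ x), fun n => ⟨?_, ?_, ?_⟩, ?_⟩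
  · exact add_pos_of_nonneg_of_pos diam_nonneg (hδ n).2.1
  · linarith [hdiam n, (hδ n).2.2]
  · linarith [diam_thickening_le (T n) (half_pos (hδ n).2.1).le]
  have hgeom : ∑ n ∈ I, (1 / 2 : ℝ) ^ n ≤ 2 :=
    (summable_geometric_two.sum_le_tsum I fun n _ => by positivity).trans_eq tsum_geometric_two
  calc ∑ n ∈ I, (diam (T n) + δ n) ^ t
      ≤ ∑ n ∈ I, (diam (T n) ^ t + θ / 4 * (1 / 2) ^ n) :=
        Finset.sum_le_sum fun n _ => (hδ n).1.le
    _ = ∑ n ∈ I, diam (T n) ^ t + θ / 4 * ∑ n ∈ I, (1 / 2 : ℝ) ^ n := by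
        rw [Finset.sum_add_distrib, Finset.mul_sum]
    _ ≤ θ := by linarith [hsum I, mul_le_mul_of_nonneg_left hgeom (by positivity : 0 ≤ θ / 4)]

end Cover

section QuasiSelfSimilar

variable {X : Type*} [MetricSpace X] [CompactSpace X]

lemma upperBoxDim_univ_le_of_dimH_lt {lam₀ a₀ : ℝ} (hlam₀ : 0 < lam₀) (ha₀ : 0 < a₀)
    (H : ∀ N : Set X, diam N < lam₀ →
      ∃ φ : X → X, ∀ x ∈ N, ∀ y ∈ N, a₀ * dist x y ≤ diam N * dist (φ x) (φ y))
    {t : ℝ≥0} (ht : dimH (univ : Set X) < t) :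
    upperBoxDim (univ : Set X) ≤ t := by
  borelize X
  have htpos : 0 < (t : ℝ) := NNReal.coe_pos.2 (ENNReal.coe_pos.1 (pos_of_gt ht))
  -- `ρ` makes `H` apply to every `V n` and the ratios `c n = 2 * (r n / a₀)` at most `1 / 2`;
  -- `θ` makes `∑ c n ^ t ≤ 1`.
  obtain ⟨I, V, r, hcov, hr, hsum⟩ := exists_finite_cover_sum_rpow_le htpos
    (hausdorffMeasure_of_dimH_lt ht) (ρ := min (lam₀ / 2) (a₀ / 4)) (by positivity)
    (θ := (a₀ / 2) ^ (t : ℝ)) (by positivity)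
  have hr_lam : ∀ n, r n < lam₀ := fun n => by
    linarith [(hr n).2.1, min_le_left (lam₀ / 2) (a₀ / 4)]
  choose φ hφ using fun n => H (V n) ((hr n).2.2.trans_lt (hr_lam n))
  have hexp :
      ∀ n ∈ I, ∀ x ∈ V n, ∀ y ∈ V n, dist x y ≤ r n / a₀ * dist (φ n x) (φ n y) := by
    intro n _ x hx y hy
    rw [div_mul_eq_mul_div, le_div_iff₀ ha₀, mul_comm]
    exact (hφ n x hx y hy).trans (mul_le_mul_of_nonneg_right (hr n).2.2 dist_nonneg)
  have hratio : ∑ n ∈ I, (2 * (r n / a₀)) ^ (t : ℝ) ≤ 1 := by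
    have hc : ∀ n, 2 * (r n / a₀) = r n / (a₀ / 2) := fun n => by ring
    simp_rw [hc, Real.div_rpow (hr _).1.le (by positivity : 0 ≤ a₀ / 2), ← Finset.sum_div]
    exact div_le_one_of_le₀ hsum (by positivity)
  have hrec : ∀ ε, 0 < ε → (packNum (univ : Set X) ε : ℝ) ≤
      ∑ n ∈ I, (packNum (univ : Set X) (ε / (2 * (r n / a₀))) : ℝ) := fun ε hε => by
    exact_mod_cast packNum_le_sum_packNum hcov (fun n _ => div_pos (hr n).1 ha₀) hexp hε
  obtain ⟨K, hK⟩ := exists_le_mul_rpow_neg_of_le_sum (c := fun n => 2 * (r n / a₀)) t.2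
    (fun n _ => by have := (hr n).1; positivity)
    (fun n _ => by
      rw [← mul_div_assoc, div_le_iff₀ ha₀]
      linarith [(hr n).2.1, min_le_right (lam₀ / 2) (a₀ / 4)])
    hratio (N := fun ε => (packNum (univ : Set X) ε : ℝ)) (fun _ => Nat.cast_nonneg _)
    (fun _ ha _ hb hab => Nat.cast_le.2 (packNum_antitoneOn ha hb hab)) hrec
  simpa using upperBoxDim_le_of_packNum_le hK

lemma upperBoxDim_univ_le_dimH {lam₀ a₀ : ℝ} (hlam₀ : 0 < lam₀) (ha₀ : 0 < a₀)
    (H : ∀ N : Set X, diam N < lam₀ →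
      ∃ φ : X → X, ∀ x ∈ N, ∀ y ∈ N, a₀ * dist x y ≤ diam N * dist (φ x) (φ y)) :
    upperBoxDim (univ : Set X) ≤ dimH (univ : Set X) :=
  le_of_forall_gt_imp_ge_of_dense fun q hq => by
    obtain ⟨t, ht, htq⟩ := ENNReal.lt_iff_exists_nnreal_btwn.1 hq
    exact (upperBoxDim_univ_le_of_dimH_lt hlam₀ ha₀ H ht).trans htq.le

end QuasiSelfSimilar

theorem stmt8_general (X : Type*) [MetricSpace X] [CompactSpace X]
    (lam₀ a₀ : ℝ) (hlam₀ : 0 < lam₀) (ha₀ : 0 < a₀)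
    (H : ∀ N : Set X, Metric.diam N < lam₀ →
      ∃ φ : X → X, ∀ x ∈ N, ∀ y ∈ N,
        a₀ * dist x y ≤ Metric.diam N * dist (φ x) (φ y)) :
    dimH (Set.univ : Set X) = lowerBoxDim (Set.univ : Set X) ∧
    lowerBoxDim (Set.univ : Set X) = upperBoxDim (Set.univ : Set X) := by
  have hHL : dimH (univ : Set X) ≤ lowerBoxDim univ := dimH_univ_le_lowerBoxDim
  have hLU : lowerBoxDim (univ : Set X) ≤ upperBoxDim univ := liminf_le_limsup
  have hUH : upperBoxDim (univ : Set X) ≤ dimH univ := upperBoxDim_univ_le_dimH hlam₀ ha₀ H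
  exact ⟨hHL.antisymm (hLU.trans hUH), hLU.antisymm (hUH.trans hHL)⟩

/-- Falconer's theorem on quasi-self-similar sets.  Let `X` be a nonempty compact metric
space which is expansively quasi-self-similar: there exist `λ₀, a₀ > 0` such that for
every `N ⊆ X` with `diam N < λ₀` there is a map `φ : N → X` with
`a₀·d(x,y) ≤ diam N · d(φx, φy)` for all `x, y ∈ N`.  Then the Hausdorff dimension and
the lower and upper box-counting dimensions of `X` all coincide. -/
theorem stmt8 (X : Type*) [MetricSpace X] [CompactSpace X] [Nonempty X]
    (lam₀ a₀ : ℝ) (hlam₀ : 0 < lam₀) (ha₀ : 0 < a₀)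
    (H : ∀ N : Set X, Metric.diam N < lam₀ →
      ∃ φ : X → X, ∀ x ∈ N, ∀ y ∈ N,
        a₀ * dist x y ≤ Metric.diam N * dist (φ x) (φ y)) :
    dimH (Set.univ : Set X) = lowerBoxDim (Set.univ : Set X) ∧
    lowerBoxDim (Set.univ : Set X) = upperBoxDim (Set.univ : Set X) :=
  stmt8_general X lam₀ a₀ hlam₀ ha₀ H

end
end

section
/- Suppose Γ₀ is a group, ρ: Γ₀ → PGL(d,ℝ) a representation, and there exist constants c > 1, C > 0 such that log(σ₂/σ₃)(ρ(γ)) ≤ c·log(σ₁/σ₂)(ρ(γ)) + C for all γ ∈ Γ₀ (d = 3). For s > 1 define the affine series Φ(s) = ∑_γ (σ₂/σ₁)(ρ(γ)) · ((σ₃/σ₁)(ρ(γ)))^{s−1} and the Poincaré series Q(t) = ∑_γ ((σ₂/σ₁)(ρ(γ)))^t. Then Φ(s) ≥ e^{−C(s−1)}·Q(s + c(s−1)) for s > 1. Consequently, if the critical exponent of Q is strictly greater than 1, then the affinity exponent (critical exponent of Φ) is strictly greater than 1. -/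
open ENNReal

private lemma keyterm (a b c C s : ℝ) (ha : 0 ≤ a) (hb : 0 ≤ b) (hs : 1 < s)
    (hcomp : b ≤ c * a + C) :
    Real.exp (-(C * (s - 1))) * (Real.exp (-a)) ^ (s + c * (s - 1)) ≤
      Real.exp (-a) * (Real.exp (-(a + b))) ^ (s - 1) := by
  rw [← Real.exp_mul, ← Real.exp_mul, ← Real.exp_add, ← Real.exp_add]
  apply Real.exp_le_exp.mpr
  nlinarith [mul_nonneg (by linarith : (0:ℝ) ≤ s - 1) (by linarith : 0 ≤ c * a + C - b)]

/-- Abstract version of the implication (2) ⇒ (3) of Theorem 6.1 for `d = 3`.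
For a representation `ρ : Γ₀ → PGL(3,ℝ)`, write `a(γ) = log (σ₁/σ₂)(ρ(γ)) ≥ 0` and
`b(γ) = log (σ₂/σ₃)(ρ(γ)) ≥ 0`, so that `(σ₂/σ₁)(ρ(γ)) = e^{-a(γ)}` and
`(σ₃/σ₁)(ρ(γ)) = e^{-(a(γ)+b(γ))}`.  Assume `b(γ) ≤ c·a(γ) + C` for constants
`c > 1, C > 0`.  Then the affine series `Φ(s) = ∑ (σ₂/σ₁) ((σ₃/σ₁))^{s-1}` and
Poincaré series `Q(t) = ∑ ((σ₂/σ₁))^t` satisfy `Φ(s) ≥ e^{-C(s-1)}·Q(s + c(s-1))`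
for `s > 1`; consequently if the critical exponent of `Q` is `> 1` then the
affinity exponent (critical exponent of `Φ`) is `> 1`. -/
theorem stmt11 (Γ₀ : Type*) [Group Γ₀] [Countable Γ₀]
    (a b : Γ₀ → ℝ) (ha : ∀ γ, 0 ≤ a γ) (hb : ∀ γ, 0 ≤ b γ)
    (c C : ℝ) (hc : 1 < c) (hC : 0 < C)
    (hcomp : ∀ γ, b γ ≤ c * a γ + C)
    (Φ Q : ℝ → ℝ≥0∞)
    (hΦ : ∀ s, Φ s = ∑' γ : Γ₀,
      ENNReal.ofReal (Real.exp (-a γ) * (Real.exp (-(a γ + b γ))) ^ (s - 1)))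
    (hQ : ∀ t, Q t = ∑' γ : Γ₀, ENNReal.ofReal ((Real.exp (-a γ)) ^ t)) :
    (∀ s : ℝ, 1 < s →
      ENNReal.ofReal (Real.exp (-(C * (s - 1)))) * Q (s + c * (s - 1)) ≤ Φ s) ∧
    (1 < sInf {t : ℝ | 0 ≤ t ∧ Q t ≠ ⊤} → 1 < sInf {s : ℝ | 0 ≤ s ∧ Φ s ≠ ⊤}) := by
  have hexple1 : ∀ γ, Real.exp (-a γ) ≤ 1 := fun γ =>
    Real.exp_le_one_iff.mpr (by linarith [ha γ])
  have hpart1 : ∀ s : ℝ, 1 < s →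
      ENNReal.ofReal (Real.exp (-(C * (s - 1)))) * Q (s + c * (s - 1)) ≤ Φ s := by
    intro s hs
    rw [hΦ s, hQ (s + c * (s - 1)), ← ENNReal.tsum_mul_left]
    refine ENNReal.tsum_le_tsum fun γ => ?_
    rw [← ENNReal.ofReal_mul (Real.exp_pos _).le]
    exact ENNReal.ofReal_le_ofReal
      (keyterm (a γ) (b γ) c C s (ha γ) (hb γ) hs (hcomp γ))
  refine ⟨hpart1, fun hT => ?_⟩
  set QS := {t : ℝ | 0 ≤ t ∧ Q t ≠ ⊤} with hQS
  set S := {s : ℝ | 0 ≤ s ∧ Φ s ≠ ⊤} with hS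
  have hbdd : BddBelow QS := ⟨0, fun x hx => hx.1⟩
  -- QS is nonempty
  have hQSne : QS.Nonempty := by
    by_contra h
    rw [Set.not_nonempty_iff_eq_empty] at h
    rw [h, Real.sInf_empty] at hT
    linarith
  obtain ⟨t₀, ht₀0, ht₀⟩ := hQSne
  -- Q is antitone
  have hQmono : ∀ t t' : ℝ, t ≤ t' → Q t' ≤ Q t := by
    intro t t' htt
    rw [hQ t, hQ t']
    refine ENNReal.tsum_le_tsum fun γ => ENNReal.ofReal_le_ofReal ?_
    exact Real.rpow_le_rpow_of_exponent_ge (Real.exp_pos _) (hexple1 γ) htt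
  -- Φ s ≤ Q s for s ≥ 1
  have hΦleQ : ∀ s : ℝ, 1 ≤ s → Φ s ≤ Q s := by
    intro s hs
    rw [hΦ s, hQ s]
    refine ENNReal.tsum_le_tsum fun γ => ENNReal.ofReal_le_ofReal ?_
    have h1 : (Real.exp (-(a γ + b γ))) ^ (s - 1) ≤ (Real.exp (-a γ)) ^ (s - 1) :=
      Real.rpow_le_rpow (Real.exp_pos _).le
        (Real.exp_le_exp.mpr (by linarith [hb γ])) (by linarith)
    calc Real.exp (-a γ) * (Real.exp (-(a γ + b γ))) ^ (s - 1)
        ≤ Real.exp (-a γ) * (Real.exp (-a γ)) ^ (s - 1) := by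
          exact mul_le_mul_of_nonneg_left h1 (Real.exp_pos _).le
      _ = (Real.exp (-a γ)) ^ s := by
          nth_rewrite 1 [← Real.rpow_one (Real.exp (-a γ))]
          rw [← Real.rpow_add (Real.exp_pos _)]
          norm_num
  -- S is nonempty
  have hSne : S.Nonempty := by
    refine ⟨max t₀ 1, le_trans zero_le_one (le_max_right _ _), ?_⟩
    have h1 : Φ (max t₀ 1) ≤ Q t₀ :=
      le_trans (hΦleQ _ (le_max_right _ _)) (hQmono _ _ (le_max_left _ _))
    exact fun h => ht₀ (top_le_iff.mp (h ▸ h1))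
  -- Q t = ⊤ for 0 ≤ t < sInf QS
  have hQtop : ∀ t : ℝ, 0 ≤ t → t < sInf QS → Q t = ⊤ := by
    intro t ht0 htlt
    by_contra h
    exact absurd (csInf_le hbdd ⟨ht0, h⟩) (not_le.mpr htlt)
  -- every element of S is > 1
  have hSgt1 : ∀ s ∈ S, 1 < s := by
    intro s hsS
    by_contra h
    push_neg at h
    set t := (1 + sInf QS) / 2 with htdef
    have ht1 : 1 < t := by rw [htdef]; linarith
    have htlt : t < sInf QS := by rw [htdef]; linarith
    have hQt : Q t = ⊤ := hQtop t (by linarith) htlt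
    -- Q t ≤ Φ s
    have hle : Q t ≤ Φ s := by
      rw [hΦ s, hQ t]
      refine ENNReal.tsum_le_tsum fun γ => ENNReal.ofReal_le_ofReal ?_
      have h1 : (Real.exp (-a γ)) ^ t ≤ Real.exp (-a γ) := by
        calc (Real.exp (-a γ)) ^ t ≤ (Real.exp (-a γ)) ^ (1:ℝ) :=
              Real.rpow_le_rpow_of_exponent_ge (Real.exp_pos _) (hexple1 γ) ht1.le
          _ = Real.exp (-a γ) := Real.rpow_one _
      have h2 : 1 ≤ (Real.exp (-(a γ + b γ))) ^ (s - 1) :=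
        Real.one_le_rpow_of_pos_of_le_one_of_nonpos (Real.exp_pos _)
          (Real.exp_le_one_iff.mpr (by linarith [ha γ, hb γ])) (by linarith)
      calc (Real.exp (-a γ)) ^ t ≤ Real.exp (-a γ) := h1
        _ = Real.exp (-a γ) * 1 := (mul_one _).symm
        _ ≤ Real.exp (-a γ) * (Real.exp (-(a γ + b γ))) ^ (s - 1) :=
            mul_le_mul_of_nonneg_left h2 (Real.exp_pos _).le
    exact hsS.2 (top_le_iff.mp (hQt ▸ hle))
  -- lower bound
  have hlb : ∀ s ∈ S, (sInf QS + c) / (1 + c) ≤ s := by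
    intro s hsS
    have hs1 : 1 < s := hSgt1 s hsS
    have h1 := hpart1 s hs1
    have hQne : Q (s + c * (s - 1)) ≠ ⊤ := by
      intro h
      rw [h, ENNReal.mul_top (by positivity)] at h1
      exact hsS.2 (top_le_iff.mp h1)
    have hmem : s + c * (s - 1) ∈ QS := ⟨by nlinarith, hQne⟩
    have := csInf_le hbdd hmem
    rw [div_le_iff₀ (by linarith : (0:ℝ) < 1 + c)]
    nlinarith
  calc (1:ℝ) < (sInf QS + c) / (1 + c) := by
        rw [lt_div_iff₀ (by linarith : (0:ℝ) < 1 + c)]; linarith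
    _ ≤ sInf S := le_csInf hSne hlb
end

section
/- Let g ∈ GL(d,ℝ) have singular value decomposition g = u·a·v with u, v orthogonal and a = diag(σ₁,…,σ_d), σ₁ ≥ … ≥ σ_d > 0, and suppose σ₁ > σ₂ and σ_{d−1} > σ_d. Let v₀ = v⁻¹e₁ (so [v₀] is the point orthogonal to the Cartan repelling hyperplane of g). Then for any c ≥ 0, the image under g of the projectivized round ball 𝓑([v₀], c) (the projectivization of the Euclidean ball of radius c centered at v₀ in the affine hyperplane tangent to the unit sphere at v₀) equals the projectivized ellipsoid centered at u[e₁] = U₁(g) with axes in directions u[e₂],…,u[e_d] and half-lengths c·σ₂/σ₁, …, c·σ_d/σ₁. -/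
/-!
Write `e₀` for the first basis vector, so that `v₀ = vᵀ e₀`. Since `vᵀ` is orthogonal, the ball
`{v₀ + w : w ⊥ v₀, ‖w‖ ≤ c}` is the image under `vᵀ` of `{e₀ + c t : t ⊥ e₀, ‖t‖ ≤ 1}`, and
`g vᵀ (e₀ + c t) = u · diag σ · (e₀ + c t) = σ₀ (u e₀ + ∑ᵢ (c σᵢ / σ₀) tᵢ u eᵢ)`.
The factor `σ₀ ≠ 0` disappears after projectivization.
-/

open Matrix
open scoped LinearAlgebra.Projectivization
open scoped Pointwise

def projSet {d : ℕ} (S : Set (Fin d → ℝ)) : Set (ℙ ℝ (Fin d → ℝ)) :=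
  {p | ∃ x : Fin d → ℝ, ∃ hx : x ≠ 0, x ∈ S ∧ p = Projectivization.mk ℝ x hx}

lemma projSet_smul {d : ℕ} {r : ℝ} (hr : r ≠ 0) (S : Set (Fin d → ℝ)) :
    projSet (r • S) = projSet S := by
  ext p
  constructor
  · rintro ⟨_, hx, ⟨y, hy, rfl⟩, rfl⟩
    have hy0 : y ≠ 0 := by rintro rfl; simp at hx
    exact ⟨y, hy0, hy, (Projectivization.mk_eq_mk_iff' ℝ _ _ hx hy0).mpr ⟨r, rfl⟩⟩
  · rintro ⟨y, hy0, hy, rfl⟩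
    have hx : r • y ≠ 0 := smul_ne_zero hr hy0
    exact ⟨r • y, hx, Set.smul_mem_smul_set hy,
      (Projectivization.mk_eq_mk_iff' ℝ _ _ hy0 hx).mpr ⟨r⁻¹, inv_smul_smul₀ hr y⟩⟩

variable {n : Type*} [Fintype n]

lemma setOf_orthogonal_dotProduct_self_le_sq_eq_smul (a : n → ℝ) (c : ℝ) :
    {s | s ⬝ᵥ a = 0 ∧ s ⬝ᵥ s ≤ c ^ 2} = c • {t | t ⬝ᵥ a = 0 ∧ t ⬝ᵥ t ≤ 1} := by
  ext s
  constructor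
  · rintro ⟨hsa, hss⟩
    rcases eq_or_ne c 0 with rfl | hc
    · have hs : s = 0 := dotProduct_self_eq_zero.mp <|
        le_antisymm (by simpa using hss) (Finset.sum_nonneg fun i _ => mul_self_nonneg (s i))
      exact ⟨0, by simp, by simp [hs]⟩
    · refine ⟨c⁻¹ • s, ⟨by simp [hsa], ?_⟩, smul_inv_smul₀ hc s⟩
      rw [smul_dotProduct, dotProduct_smul, smul_eq_mul, smul_eq_mul, ← mul_assoc, ← sq,
        inv_pow, inv_mul_le_iff₀ (by positivity), mul_one]
      exact hss
  · rintro ⟨t, ⟨hta, htt⟩, rfl⟩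
    refine ⟨by simp [hta], ?_⟩
    rw [smul_dotProduct, dotProduct_smul, smul_eq_mul, smul_eq_mul, ← mul_assoc, ← sq]
    exact mul_le_of_le_one_right (sq_nonneg c) htt

variable [DecidableEq n]

lemma transpose_mem_orthogonalGroup {Q : Matrix n n ℝ} (hQ : Q ∈ orthogonalGroup n ℝ) :
    Qᵀ ∈ orthogonalGroup n ℝ := by
  rw [mem_orthogonalGroup_iff, transpose_transpose]
  exact (mem_orthogonalGroup_iff' n ℝ).mp hQ

lemma dotProduct_mulVec_mulVec_of_mem_orthogonalGroup {Q : Matrix n n ℝ}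
    (hQ : Q ∈ orthogonalGroup n ℝ) (x y : n → ℝ) : Q *ᵥ x ⬝ᵥ Q *ᵥ y = x ⬝ᵥ y := by
  rw [dotProduct_mulVec, ← mulVec_transpose, mulVec_mulVec,
    (mem_orthogonalGroup_iff' n ℝ).mp hQ, one_mulVec]

lemma image_mulVec_of_mem_orthogonalGroup {Q : Matrix n n ℝ} (hQ : Q ∈ orthogonalGroup n ℝ)
    (a : n → ℝ) (r : ℝ) :
    (Q *ᵥ ·) '' {w | w ⬝ᵥ a = 0 ∧ w ⬝ᵥ w ≤ r} = {w | w ⬝ᵥ Q *ᵥ a = 0 ∧ w ⬝ᵥ w ≤ r} := by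
  have hQQt : Q * Qᵀ = 1 := (mem_orthogonalGroup_iff n ℝ).mp hQ
  have hQtQ : Qᵀ * Q = 1 := (mem_orthogonalGroup_iff' n ℝ).mp hQ
  rw [Set.image_eq_preimage_of_inverse (g := (Qᵀ *ᵥ ·))
    (fun x => by simp [mulVec_mulVec, hQtQ]) (fun x => by simp [mulVec_mulVec, hQQt])]
  ext w
  simp only [Set.mem_preimage, Set.mem_ofPred_eq]
  rw [← dotProduct_mulVec_mulVec_of_mem_orthogonalGroup hQ, mulVec_mulVec, hQQt, one_mulVec,
    dotProduct_mulVec_mulVec_of_mem_orthogonalGroup (transpose_mem_orthogonalGroup hQ)]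

lemma setOf_add_orthogonal_ball_eq_image {Q : Matrix n n ℝ} (hQ : Q ∈ orthogonalGroup n ℝ)
    (a : n → ℝ) (c : ℝ) :
    {x | ∃ w, w ⬝ᵥ Q *ᵥ a = 0 ∧ w ⬝ᵥ w ≤ c ^ 2 ∧ x = Q *ᵥ a + w} =
      (fun t => Q *ᵥ (a + c • t)) '' {t | t ⬝ᵥ a = 0 ∧ t ⬝ᵥ t ≤ 1} := by
  have hball : {x | ∃ w, w ⬝ᵥ Q *ᵥ a = 0 ∧ w ⬝ᵥ w ≤ c ^ 2 ∧ x = Q *ᵥ a + w} =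
      (Q *ᵥ a + ·) '' {w | w ⬝ᵥ Q *ᵥ a = 0 ∧ w ⬝ᵥ w ≤ c ^ 2} := by
    ext x
    constructor
    · rintro ⟨w, hwa, hww, rfl⟩
      exact ⟨w, ⟨hwa, hww⟩, rfl⟩
    · rintro ⟨w, ⟨hwa, hww⟩, rfl⟩
      exact ⟨w, hwa, hww, rfl⟩
  rw [hball, ← image_mulVec_of_mem_orthogonalGroup hQ,
    setOf_orthogonal_dotProduct_self_le_sq_eq_smul, ← Set.image_smul, Set.image_image, Set.image_image]
  simp only [mulVec_add]

lemma mulVec_eq_sum_smul_mulVec_single (M : Matrix n n ℝ) (x : n → ℝ) :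
    M *ᵥ x = ∑ i, x i • M *ᵥ Pi.single i 1 := by
  simp only [mulVec_eq_sum x, mulVec_single_one, op_smul_eq_smul]
  rfl

lemma svd_mulVec_transpose_single_add_smul {u v : Matrix n n ℝ} (hv : v ∈ orthogonalGroup n ℝ)
    {σ : n → ℝ} {i : n} (hσ : σ i ≠ 0) (c : ℝ) (t : n → ℝ) :
    (u * diagonal σ * v) *ᵥ (vᵀ *ᵥ (Pi.single i 1 + c • t)) =
      σ i • (u *ᵥ Pi.single i 1 + ∑ j, (c * σ j / σ i * t j) • u *ᵥ Pi.single j 1) := by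
  rw [mulVec_mulVec, mul_assoc, mul_assoc, (mem_orthogonalGroup_iff n ℝ).mp hv, mul_one,
    ← mulVec_mulVec, ← mulVec_eq_sum_smul_mulVec_single u (fun j => c * σ j / σ i * t j),
    ← mulVec_add, ← mulVec_smul]
  congr 1
  ext j
  simp only [mulVec_diagonal, Pi.add_apply, Pi.smul_apply, smul_eq_mul]
  rcases eq_or_ne j i with rfl | hj
  · simp only [Pi.single_eq_same]
    field_simp
  · simp only [Pi.single_eq_of_ne hj]
    field_simp
    ring

/-- Lemma 2.2: let `g = u·a·v` be a singular value decomposition (`u, v` orthogonal,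
`a = diag(σ₁,…,σ_d)` with `σ₁ ≥ … ≥ σ_d > 0`), with `σ₁ > σ₂` and `σ_{d-1} > σ_d`.
Let `v₀ = v⁻¹ e₁ = vᵀ e₁` (the point orthogonal to the Cartan repelling hyperplane).
Then, for any `c ≥ 0`, the image under `g` of the ball `𝓑([v₀], c)` — the projectivization
of `{v₀ + w : w ⊥ v₀, ‖w‖ ≤ c}` — equals the projectivized ellipsoid centered at
`U₁(g) = u e₁`, with axes in the directions `u e₂, …, u e_d` and half-lengths
`c·σ₂/σ₁, …, c·σ_d/σ₁`. -/
theorem stmt16 (d : ℕ) (hd : 2 ≤ d)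
    (g u a v : Matrix (Fin d) (Fin d) ℝ)
    (hv : v ∈ Matrix.orthogonalGroup (Fin d) ℝ)
    (σ : Fin d → ℝ) (hσpos : ∀ i, 0 < σ i)
    (ha : a = Matrix.diagonal σ) (hsvd : g = u * a * v)
    (c : ℝ)
    (v₀ : Fin d → ℝ) (hv₀ : v₀ = vᵀ.mulVec (Pi.single ⟨0, by omega⟩ 1)) :
    projSet (g.mulVec ''
        {x : Fin d → ℝ | ∃ w : Fin d → ℝ,
          w ⬝ᵥ v₀ = 0 ∧ w ⬝ᵥ w ≤ c ^ 2 ∧ x = v₀ + w}) =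
    projSet
        {x : Fin d → ℝ | ∃ t : Fin d → ℝ,
          t ⟨0, by omega⟩ = 0 ∧ (∑ i, (t i) ^ 2) ≤ 1 ∧
          x = u.mulVec (Pi.single ⟨0, by omega⟩ 1) +
            ∑ i, ((c * σ i / σ ⟨0, by omega⟩) * t i) • u.mulVec (Pi.single i 1)} := by
  subst ha hsvd hv₀
  have hσ₀ : σ ⟨0, by omega⟩ ≠ 0 := (hσpos _).ne'
  rw [setOf_add_orthogonal_ball_eq_image (transpose_mem_orthogonalGroup hv), Set.image_image]
  simp_rw [svd_mulVec_transpose_single_add_smul hv hσ₀]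
  rw [← Set.image_image (σ ⟨0, by omega⟩ • ·), Set.image_smul, projSet_smul hσ₀]
  congr 1
  ext x
  have hdot : ∀ t : Fin d → ℝ, t ⬝ᵥ t = ∑ i, t i ^ 2 := fun t => by simp only [dotProduct, sq]
  simp only [Set.mem_image, Set.mem_ofPred_eq, dotProduct_single_one, hdot, and_assoc,
    eq_comm (a := x)]
end
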